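/- arXiv:2210.10748 — 2 statements merged into one kernel-verified Lean document; each statement's English description precedes it below -/
import Mathlib

section
/- For |q|<1 and any fixed integer $n$, the Durfee rectangle identity holds: $\sum_{j=\max(0,-n)}^{\infty} \frac{q^{j(j+n)}}{(q;q)_j (q;q)_{j+n}} = \frac{1}{(q;q)_\infty}$. -/
/-!
With the Gaussian binomials `[m, k]` (defined by the q-Pascal rule), q-Vandermonde and the
symmetry `[M, M - j] = [M, j]` give the finite identity
`∑ j, q^(j(j+n)) [M, j] [M, j+n] = [2M, M+n]`.
As `M → ∞`, `[M, k] = (q;q)_M / ((q;q)_k (q;q)_(M-k)) → 1 / (q;q)_k` and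
`[2M, M+n] → 1 / (q;q)_∞`, because `(q;q)_M` tends to the nonzero limit `(q;q)_∞`.
The same convergence bounds all `[M, k]` uniformly, so Tannery's theorem lets the limit pass
through the sum. Negative `n` reduces to `-n` by shifting `j`.
-/

open Finset Filter Topology

section QBinomial

variable {R : Type*} [CommRing R] (q : R)

def qPochhammer (m : ℕ) : R := ∏ k ∈ range m, (1 - q ^ (k + 1))

def qBinomial : ℕ → ℕ → R
  | _, 0 => 1
  | 0, _ + 1 => 0
  | m + 1, k + 1 => q ^ (k + 1) * qBinomial m (k + 1) + qBinomial m k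

variable {q}

@[simp] lemma qPochhammer_zero : qPochhammer q 0 = 1 := prod_range_zero _

lemma qPochhammer_succ (m : ℕ) : qPochhammer q (m + 1) = qPochhammer q m * (1 - q ^ (m + 1)) :=
  prod_range_succ _ m

@[simp] lemma qBinomial_zero_right (m : ℕ) : qBinomial q m 0 = 1 := by cases m <;> rfl

@[simp] lemma qBinomial_zero_succ (k : ℕ) : qBinomial q 0 (k + 1) = 0 := rfl

lemma qBinomial_succ_succ (m k : ℕ) :
    qBinomial q (m + 1) (k + 1) = q ^ (k + 1) * qBinomial q m (k + 1) + qBinomial q m k := rfl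

lemma qBinomial_eq_zero_of_lt {m k : ℕ} (h : m < k) : qBinomial q m k = 0 := by
  induction m generalizing k with
  | zero => obtain ⟨k, rfl⟩ := Nat.exists_eq_add_one_of_ne_zero h.ne'; rfl
  | succ m ih =>
    obtain ⟨k, rfl⟩ := Nat.exists_eq_add_one_of_ne_zero (Nat.ne_zero_of_lt h)
    rw [qBinomial_succ_succ, ih (by omega), ih (by omega), mul_zero, add_zero]

@[simp] lemma qBinomial_self (m : ℕ) : qBinomial q m m = 1 := by
  induction m with
  | zero => rfl
  | succ m ih => rw [qBinomial_succ_succ, qBinomial_eq_zero_of_lt m.lt_succ_self, ih]; ring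

lemma qBinomial_add_mul_qPochhammer (a b : ℕ) :
    qBinomial q (a + b) a * qPochhammer q a * qPochhammer q b = qPochhammer q (a + b) := by
  induction a generalizing b with
  | zero => simp
  | succ a iha =>
    induction b with
    | zero => simp
    | succ b ihb =>
      have h := iha (b + 1)
      rw [show a + 1 + b = a + (b + 1) by omega, qPochhammer_succ a] at ihb
      rw [qPochhammer_succ b] at h
      rw [show a + 1 + (b + 1) = a + (b + 1) + 1 by omega, qBinomial_succ_succ, qPochhammer_succ a,
        qPochhammer_succ b, qPochhammer_succ (a + (b + 1))]
      linear_combination (q ^ (a + 1) * (1 - q ^ (b + 1))) * ihb + (1 - q ^ (a + 1)) * h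

lemma qBinomial_add_left (m N k : ℕ) :
    qBinomial q (m + N) k =
      ∑ p ∈ antidiagonal k, q ^ ((m - p.1) * p.2) * qBinomial q m p.1 * qBinomial q N p.2 := by
  induction m generalizing k with
  | zero =>
    cases k with
    | zero => simp
    | succ k => simp [Nat.sum_antidiagonal_succ]
  | succ m ih =>
    cases k with
    | zero => simp
    | succ k =>
      have hterm : ∀ p ∈ antidiagonal k,
          q ^ ((m + 1 - (p.1 + 1)) * p.2) * qBinomial q (m + 1) (p.1 + 1) * qBinomial q N p.2 =
            q ^ (k + 1) *
                (q ^ ((m - (p.1 + 1)) * p.2) * qBinomial q m (p.1 + 1) * qBinomial q N p.2) +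
              q ^ ((m - p.1) * p.2) * qBinomial q m p.1 * qBinomial q N p.2 := by
        rintro ⟨i, j⟩ hij
        obtain rfl : i + j = k := mem_antidiagonal.mp hij
        rw [qBinomial_succ_succ, Nat.add_sub_add_right]
        rcases lt_or_ge i m with hi | hi
        · rw [show m - i = m - (i + 1) + 1 by omega]
          ring
        · rw [qBinomial_eq_zero_of_lt (by omega : m < i + 1)]
          ring
      rw [show m + 1 + N = m + N + 1 by omega, qBinomial_succ_succ, ih, ih,
        Nat.sum_antidiagonal_succ, Nat.sum_antidiagonal_succ, sum_congr rfl hterm,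
        sum_add_distrib, mul_add, mul_sum]
      simp only [Nat.sub_zero, qBinomial_zero_right]
      ring

lemma qBinomial_symm [IsDomain R] {m k : ℕ} (hk : k ≤ m) (hPk : qPochhammer q k ≠ 0)
    (hPmk : qPochhammer q (m - k) ≠ 0) : qBinomial q m (m - k) = qBinomial q m k := by
  obtain ⟨a, rfl⟩ := Nat.exists_eq_add_of_le' hk
  rw [Nat.add_sub_cancel] at hPmk ⊢
  have hak := qBinomial_add_mul_qPochhammer (q := q) a k
  have hka := qBinomial_add_mul_qPochhammer (q := q) k a
  rw [add_comm k a] at hka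
  apply mul_right_cancel₀ (mul_ne_zero hPmk hPk)
  linear_combination hak - hka

lemma sum_qBinomial_mul_qBinomial_add [IsDomain R] (hq : ∀ m, qPochhammer q m ≠ 0) (M n : ℕ) :
    ∑ j ∈ range (M + 1), q ^ (j * (j + n)) * qBinomial q M j * qBinomial q M (j + n) =
      qBinomial q (M + M) (M + n) := by
  -- q-Vandermonde at `k = M + n`: terms with `i > M` vanish, the rest are reindexed by `i = M - j`.
  have hvdm := qBinomial_add_left (q := q) M M (M + n)
  rw [Nat.sum_antidiagonal_eq_sum_range_succ
      (fun i j => q ^ ((M - i) * j) * qBinomial q M i * qBinomial q M j),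
    show (M + n).succ = M + 1 + n by omega, sum_range_add,
    sum_eq_zero (s := range n) fun i _ => by
      rw [qBinomial_eq_zero_of_lt (by omega : M < M + 1 + i)]; ring,
    add_zero, ← sum_range_reflect] at hvdm
  rw [hvdm]
  refine sum_congr rfl fun j hj => ?_
  have hjM : j ≤ M := Nat.lt_succ_iff.mp (mem_range.mp hj)
  rw [show M + 1 - 1 - j = M - j by omega, show M + n - (M - j) = j + n by omega,
    Nat.sub_sub_self hjM, qBinomial_symm hjM (hq _) (hq _)]

lemma qBinomial_eq_div {K : Type*} [Field K] {q : K} {m k : ℕ} (hk : k ≤ m)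
    (hPk : qPochhammer q k ≠ 0) (hPmk : qPochhammer q (m - k) ≠ 0) :
    qBinomial q m k = qPochhammer q m / (qPochhammer q k * qPochhammer q (m - k)) := by
  obtain ⟨a, rfl⟩ := Nat.exists_eq_add_of_le hk
  rw [Nat.add_sub_cancel_left] at hPmk ⊢
  rw [eq_div_iff (mul_ne_zero hPk hPmk), ← mul_assoc, qBinomial_add_mul_qPochhammer]

end QBinomial

section Complex

variable {q : ℂ}

lemma one_sub_pow_succ_ne_zero (hq : ‖q‖ < 1) (k : ℕ) : 1 - q ^ (k + 1) ≠ 0 :=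
  sub_ne_zero.2 fun h =>
    (pow_lt_one₀ (norm_nonneg q) hq k.succ_ne_zero).ne (by rw [← norm_pow, ← h, norm_one])

lemma qPochhammer_ne_zero (hq : ‖q‖ < 1) (m : ℕ) : qPochhammer q m ≠ 0 :=
  prod_ne_zero_iff.2 fun k _ => one_sub_pow_succ_ne_zero hq k

lemma tendsto_qPochhammer (hq : ‖q‖ < 1) :
    Tendsto (qPochhammer q) atTop (𝓝 (∏' k : ℕ, (1 - q ^ (k + 1)))) :=
  (ModularForm.multipliable_one_sub_pow hq).hasProd.tendsto_prod_nat

lemma tprod_one_sub_pow_ne_zero (hq : ‖q‖ < 1) : ∏' k : ℕ, (1 - q ^ (k + 1)) ≠ 0 := by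
  have h := tprod_one_add_ne_zero_of_summable (f := fun k : ℕ => -q ^ (k + 1))
    (fun k => by simpa [← sub_eq_add_neg] using one_sub_pow_succ_ne_zero hq k)
    (by simpa using (summable_nat_add_iff 1).mpr (summable_geometric_of_lt_one (norm_nonneg _) hq))
  simpa [← sub_eq_add_neg] using h

lemma exists_norm_qBinomial_le (hq : ‖q‖ < 1) : ∃ C, ∀ m k, ‖qBinomial q m k‖ ≤ C := by
  obtain ⟨U, hU⟩ := (tendsto_qPochhammer hq).norm.bddAbove_range
  obtain ⟨V, hV⟩ :=
    ((tendsto_qPochhammer hq).inv₀ (tprod_one_sub_pow_ne_zero hq)).norm.bddAbove_range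
  have hU0 : 0 ≤ U := (norm_nonneg _).trans (hU (Set.mem_range_self 0))
  have hV0 : 0 ≤ V := (norm_nonneg _).trans (hV (Set.mem_range_self 0))
  refine ⟨U * (V * V), fun m k => ?_⟩
  rcases le_or_gt k m with hk | hk
  · rw [qBinomial_eq_div hk (qPochhammer_ne_zero hq _) (qPochhammer_ne_zero hq _), div_eq_mul_inv,
      mul_inv, norm_mul, norm_mul]
    exact mul_le_mul (hU (Set.mem_range_self m))
      (mul_le_mul (hV (Set.mem_range_self k)) (hV (Set.mem_range_self _)) (norm_nonneg _) hV0)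
      (by positivity) hU0
  · rw [qBinomial_eq_zero_of_lt hk, norm_zero]
    positivity

lemma tendsto_qBinomial_atTop (hq : ‖q‖ < 1) (k : ℕ) :
    Tendsto (fun m => qBinomial q m k) atTop (𝓝 (qPochhammer q k)⁻¹) := by
  have hlim := (tendsto_qPochhammer hq).div
    (tendsto_const_nhds.mul ((tendsto_qPochhammer hq).comp (tendsto_sub_atTop_nat k)))
    (mul_ne_zero (qPochhammer_ne_zero hq k) (tprod_one_sub_pow_ne_zero hq))
  rw [mul_comm, div_mul_cancel_left₀ (tprod_one_sub_pow_ne_zero hq)] at hlim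
  refine hlim.congr' ?_
  filter_upwards [eventually_ge_atTop k] with m hm
  exact (qBinomial_eq_div hm (qPochhammer_ne_zero hq _) (qPochhammer_ne_zero hq _)).symm

lemma tendsto_qBinomial_central_atTop (hq : ‖q‖ < 1) (n : ℕ) :
    Tendsto (fun M => qBinomial q (M + M) (M + n)) atTop (𝓝 (∏' k : ℕ, (1 - q ^ (k + 1)))⁻¹) := by
  have hP := tendsto_qPochhammer hq
  have hc := tprod_one_sub_pow_ne_zero hq
  have hlim := (hP.comp (tendsto_id.atTop_add_atTop tendsto_id)).div
    ((hP.comp (tendsto_add_atTop_nat n)).mul (hP.comp (tendsto_sub_atTop_nat n)))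
    (mul_ne_zero hc hc)
  rw [div_mul_cancel_left₀ hc] at hlim
  refine hlim.congr' ?_
  filter_upwards [eventually_ge_atTop n] with M hM
  rw [qBinomial_eq_div (by omega) (qPochhammer_ne_zero hq _) (qPochhammer_ne_zero hq _),
    show M + M - (M + n) = M - n by omega]
  rfl

lemma durfee_rectangle_nat (hq : ‖q‖ < 1) (n : ℕ) :
    ∑' j : ℕ, q ^ (j * (j + n)) / (qPochhammer q j * qPochhammer q (j + n)) =
      (∏' k : ℕ, (1 - q ^ (k + 1)))⁻¹ := by
  obtain ⟨C, hC⟩ := exists_norm_qBinomial_le hq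
  set F : ℕ → ℕ → ℂ := fun M j => q ^ (j * (j + n)) * qBinomial q M j * qBinomial q M (j + n)
  have hF : ∀ M, ∑' j, F M j = qBinomial q (M + M) (M + n) := fun M => by
    rw [tsum_eq_sum (s := range (M + 1)) fun j hj => by
        simp [F, qBinomial_eq_zero_of_lt (show M < j by simpa using hj)],
      sum_qBinomial_mul_qBinomial_add (qPochhammer_ne_zero hq)]
  have hlim : Tendsto (fun M => ∑' j, F M j) atTop
      (𝓝 (∑' j : ℕ, q ^ (j * (j + n)) / (qPochhammer q j * qPochhammer q (j + n)))) := by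
    refine tendsto_tsum_of_dominated_convergence (bound := fun j => ‖q‖ ^ j * C * C)
      (((summable_geometric_of_lt_one (norm_nonneg q) hq).mul_right C).mul_right C)
      (fun j => ?_) (Eventually.of_forall fun M j => ?_)
    · simpa only [div_eq_mul_inv, mul_inv, ← mul_assoc] using
        (tendsto_const_nhds.mul (tendsto_qBinomial_atTop hq j)).mul
          (tendsto_qBinomial_atTop hq (j + n))
    · have hpow : ‖q‖ ^ (j * (j + n)) ≤ ‖q‖ ^ j :=
        pow_le_pow_of_le_one (norm_nonneg q) hq.le
          ((Nat.le_mul_self j).trans (Nat.mul_le_mul_left j (Nat.le_add_right j n)))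
      have hC0 : 0 ≤ C := (norm_nonneg _).trans (hC 0 0)
      simp only [F, norm_mul, norm_pow]
      exact mul_le_mul (mul_le_mul hpow (hC M j) (norm_nonneg _) (by positivity)) (hC M (j + n))
        (norm_nonneg _) (by positivity)
  simp only [hF] at hlim
  exact tendsto_nhds_unique hlim (tendsto_qBinomial_central_atTop hq n)

end Complex

/-- Durfee rectangle identity. -/
theorem durfee_rectangle (q : ℂ) (hq : ‖q‖ < 1) (n : ℤ) :
    (∑' j : ℕ, (q ^ (((j + max 0 (-n)) * ((j + max 0 (-n)) + n)).toNat) /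
      ((∏ k ∈ Finset.range ((j + max 0 (-n)) : ℤ).toNat, (1 - q ^ (k + 1))) *
        ∏ k ∈ Finset.range (((j + max 0 (-n)) : ℤ) + n).toNat, (1 - q ^ (k + 1))))) =
    1 / ∏' k : ℕ, (1 - q ^ (k + 1)) := by
  obtain ⟨m, rfl | rfl⟩ := Int.eq_nat_or_neg n
  · rw [one_div, ← durfee_rectangle_nat hq m]
    refine tsum_congr fun j => ?_
    simp only [max_eq_left (neg_nonpos.2 (Int.natCast_nonneg m)), add_zero, ← Nat.cast_add,
      ← Nat.cast_mul, Int.toNat_natCast]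
    rfl
  · rw [one_div, ← durfee_rectangle_nat hq m]
    refine tsum_congr fun j => ?_
    simp only [neg_neg, max_eq_right (Int.natCast_nonneg m), add_neg_cancel_right]
    simp only [← Nat.cast_add, ← Nat.cast_mul, Int.toNat_natCast]
    rw [mul_comm j, mul_comm (qPochhammer q j)]
    rfl
end

section
/- For |q|<1, $\sum_{i,j\geq 0} \frac{q^{2i^2+2ij+j^2+2i+j}}{(q^2;q^2)_i (q^2;q^2)_j} = \frac{(q^8;q^8)_\infty}{(q^2;q^2)_\infty}$ (the case of Example 2 with $B=(1,1/2)^T$, after replacing $q$ by $q^2$). -/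
/-!
Write `t = q²`. The summand factors as `t^(i² + i) / (t;t)ᵢ · (t^(i+1))ʲ t^(j choose 2) / (t;t)ⱼ`,
so Euler's identity `∑ xⁿ t^(n choose 2) / (t;t)ₙ = ∏ₖ (1 + x tᵏ)` sums the inner series to
`(-t;t)_∞ / (-t;t)ᵢ`. Since `(t;t)ᵢ (-t;t)ᵢ = (t²;t²)ᵢ`, Euler's identity with base `t²` sums the
outer series to `(-t²;t²)_∞`, and `(-t;t)_∞ (-t²;t²)_∞ = (t⁴;t⁴)_∞ / (t;t)_∞` because
`(1 + a)(1 - a) = 1 - a²`.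

Euler's identity itself comes from the functional equation `F(x) = (1 + x) F(x t)` of its left
side, iterated `N` times, together with `F(x tᴺ) → F(0) = 1` by dominated convergence.
-/

open Finset Filter Topology

lemma two_mul_choose_two_add_self (n : ℕ) : 2 * n.choose 2 + n = n ^ 2 := by
  induction n with
  | zero => rfl
  | succ n ih => rw [Nat.choose_succ_succ', Nat.choose_one_right]; linarith

variable {𝕜 : Type*} [NormedField 𝕜]

/-- `qPoch t n` is the `q`-Pochhammer symbol `(t; t)ₙ`. -/
def qPoch (t : 𝕜) (n : ℕ) : 𝕜 := ∏ k ∈ range n, (1 - t ^ (k + 1))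

def eulerTerm (t x : 𝕜) (n : ℕ) : 𝕜 := x ^ n * t ^ n.choose 2 / qPoch t n

lemma one_add_ne_zero_of_norm_lt_one {a : 𝕜} (ha : ‖a‖ < 1) : 1 + a ≠ 0 := by
  intro h
  rw [← neg_eq_of_add_eq_zero_right h, norm_neg, norm_one] at ha
  exact lt_irrefl _ ha

lemma one_sub_ne_zero_of_norm_lt_one {a : 𝕜} (ha : ‖a‖ < 1) : 1 - a ≠ 0 := by
  simpa [sub_eq_add_neg] using one_add_ne_zero_of_norm_lt_one (a := -a) (by rwa [norm_neg])

section
variable {t : 𝕜}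

lemma norm_pow_succ_lt_one (ht : ‖t‖ < 1) (k : ℕ) : ‖t ^ (k + 1)‖ < 1 := by
  rw [norm_pow]; exact pow_lt_one₀ (norm_nonneg t) ht k.succ_ne_zero

lemma one_sub_norm_le_norm_one_sub_pow_succ (ht : ‖t‖ ≤ 1) (k : ℕ) :
    1 - ‖t‖ ≤ ‖1 - t ^ (k + 1)‖ := by
  have h := norm_sub_norm_le (1 : 𝕜) (t ^ (k + 1))
  rw [norm_one, norm_pow] at h
  linarith [pow_le_of_le_one (norm_nonneg t) ht (Nat.add_one_ne_zero k)]

lemma summable_norm_pow_succ (ht : ‖t‖ < 1) : Summable fun k ↦ ‖t ^ (k + 1)‖ := by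
  simpa [norm_pow] using
    (summable_nat_add_iff 1).mpr (summable_geometric_of_lt_one (norm_nonneg t) ht)

lemma qPoch_ne_zero (ht : ‖t‖ < 1) (n : ℕ) : qPoch t n ≠ 0 :=
  prod_ne_zero_iff.mpr fun k _ ↦ one_sub_ne_zero_of_norm_lt_one (norm_pow_succ_lt_one ht k)

lemma qPoch_succ (t : 𝕜) (n : ℕ) : qPoch t (n + 1) = qPoch t n * (1 - t ^ (n + 1)) :=
  prod_range_succ _ _

lemma qPoch_mul_prod_one_add (t : 𝕜) (n : ℕ) :
    qPoch t n * ∏ k ∈ range n, (1 + t ^ (k + 1)) = qPoch (t ^ 2) n := by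
  rw [qPoch, qPoch, ← prod_mul_distrib]
  exact prod_congr rfl fun k _ ↦ by ring

lemma eulerTerm_zero (t x : 𝕜) : eulerTerm t x 0 = 1 := by simp [eulerTerm, qPoch]

lemma tsum_eulerTerm_zero (t : 𝕜) : ∑' n, eulerTerm t 0 n = 1 := by
  rw [tsum_eq_single 0 fun n hn ↦ by simp [eulerTerm, zero_pow hn], eulerTerm_zero]

lemma eulerTerm_succ (ht : ‖t‖ < 1) (x : 𝕜) (n : ℕ) :
    eulerTerm t x (n + 1) = x * t ^ n / (1 - t ^ (n + 1)) * eulerTerm t x n := by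
  have := qPoch_ne_zero ht n
  have := one_sub_ne_zero_of_norm_lt_one (norm_pow_succ_lt_one ht n)
  rw [eulerTerm, eulerTerm, qPoch_succ, Nat.choose_succ_succ', Nat.choose_one_right]
  field_simp
  ring

lemma eulerTerm_succ_eq_add (ht : ‖t‖ < 1) (x : 𝕜) (n : ℕ) :
    eulerTerm t x (n + 1) = eulerTerm t (x * t) (n + 1) + x * eulerTerm t (x * t) n := by
  have := qPoch_ne_zero ht n
  have := one_sub_ne_zero_of_norm_lt_one (norm_pow_succ_lt_one ht n)
  rw [eulerTerm, eulerTerm, eulerTerm, qPoch_succ, Nat.choose_succ_succ', Nat.choose_one_right]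
  field_simp
  ring

lemma norm_eulerTerm_le_of_norm_le (t : 𝕜) {x y : 𝕜} (h : ‖y‖ ≤ ‖x‖) (n : ℕ) :
    ‖eulerTerm t y n‖ ≤ ‖eulerTerm t x n‖ := by
  simp only [eulerTerm, norm_div, norm_mul, norm_pow]
  gcongr

lemma summable_norm_eulerTerm (ht : ‖t‖ < 1) (x : 𝕜) : Summable fun n ↦ ‖eulerTerm t x n‖ := by
  refine summable_of_ratio_norm_eventually_le one_half_lt_one ?_
  have hlim : Tendsto (fun n ↦ ‖x‖ * ‖t‖ ^ n / (1 - ‖t‖)) atTop (𝓝 0) := by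
    simpa using ((tendsto_pow_atTop_nhds_zero_of_lt_one (norm_nonneg t) ht).const_mul ‖x‖).div_const
      (1 - ‖t‖)
  filter_upwards [hlim.eventually (ge_mem_nhds one_half_pos)] with n hn
  rw [norm_norm, norm_norm, eulerTerm_succ ht, norm_mul]
  gcongr
  calc ‖x * t ^ n / (1 - t ^ (n + 1))‖ ≤ ‖x‖ * ‖t‖ ^ n / (1 - ‖t‖) := by
        rw [norm_div, norm_mul, norm_pow]
        gcongr
        exact one_sub_norm_le_norm_one_sub_pow_succ ht.le n
    _ ≤ 1 / 2 := hn

lemma pow_div_qPoch_mul_qPoch_eq (t : 𝕜) (i j : ℕ) :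
    t ^ (i ^ 2 + i * j + j.choose 2 + i + j) / (qPoch t i * qPoch t j) =
      (t ^ 2) ^ i * (t ^ 2) ^ i.choose 2 / qPoch t i * eulerTerm t (t ^ (i + 1)) j := by
  have hexp : i ^ 2 + i * j + j.choose 2 + i + j =
      2 * i + 2 * i.choose 2 + ((i + 1) * j + j.choose 2) := by
    linarith [two_mul_choose_two_add_self i]
  rw [hexp, eulerTerm, pow_add, pow_add, pow_add, pow_mul, pow_mul, pow_mul]
  ring

end

section
variable [CompleteSpace 𝕜] {t : 𝕜}

lemma multipliable_one_add_mul_pow (ht : ‖t‖ < 1) (x : 𝕜) :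
    Multipliable fun k ↦ 1 + x * t ^ k :=
  multipliable_one_add_of_summable (f := fun k ↦ x * t ^ k) <| by
    simpa [norm_mul, norm_pow] using (summable_geometric_of_lt_one (norm_nonneg t) ht).mul_left ‖x‖

lemma multipliable_one_add_pow_succ (ht : ‖t‖ < 1) : Multipliable fun k ↦ 1 + t ^ (k + 1) :=
  multipliable_one_add_of_summable (f := fun k ↦ t ^ (k + 1)) (summable_norm_pow_succ ht)

lemma multipliable_one_sub_pow_succ (ht : ‖t‖ < 1) : Multipliable fun k ↦ 1 - t ^ (k + 1) := by
  simpa [sub_eq_add_neg] using multipliable_one_add_of_summable (f := fun k ↦ -t ^ (k + 1))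
    (by simpa using summable_norm_pow_succ ht)

lemma tprod_one_sub_pow_succ_ne_zero (ht : ‖t‖ < 1) : ∏' k, (1 - t ^ (k + 1)) ≠ 0 := by
  simpa [sub_eq_add_neg] using tprod_one_add_ne_zero_of_summable (f := fun k ↦ -t ^ (k + 1))
    (fun k ↦ by
      simpa [sub_eq_add_neg] using one_sub_ne_zero_of_norm_lt_one (norm_pow_succ_lt_one ht k))
    (by simpa using summable_norm_pow_succ ht)

lemma tprod_one_add_pow_succ (ht : ‖t‖ < 1) :
    ∏' k, (1 + t ^ (k + 1)) = (∏' k, (1 - (t ^ 2) ^ (k + 1))) / ∏' k, (1 - t ^ (k + 1)) := by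
  rw [eq_div_iff (tprod_one_sub_pow_succ_ne_zero ht),
    ← (multipliable_one_add_pow_succ ht).tprod_mul (multipliable_one_sub_pow_succ ht)]
  exact tprod_congr fun k ↦ by ring

lemma tsum_eulerTerm_eq_one_add_mul (ht : ‖t‖ < 1) (x : 𝕜) :
    ∑' n, eulerTerm t x n = (1 + x) * ∑' n, eulerTerm t (x * t) n := by
  have hs : Summable (eulerTerm t (x * t)) := (summable_norm_eulerTerm ht _).of_norm
  have hs' : Summable fun n ↦ eulerTerm t (x * t) (n + 1) := (summable_nat_add_iff 1).mpr hs
  rw [(summable_norm_eulerTerm ht x).of_norm.tsum_eq_zero_add, eulerTerm_zero]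
  simp_rw [eulerTerm_succ_eq_add ht x]
  rw [hs'.tsum_add (hs.mul_left x), tsum_mul_left, hs.tsum_eq_zero_add, eulerTerm_zero]
  ring

lemma tsum_eulerTerm_eq_prod_mul (ht : ‖t‖ < 1) (x : 𝕜) (N : ℕ) :
    ∑' n, eulerTerm t x n =
      (∏ k ∈ range N, (1 + x * t ^ k)) * ∑' n, eulerTerm t (x * t ^ N) n := by
  induction N with
  | zero => simp
  | succ N ih =>
    rw [ih, tsum_eulerTerm_eq_one_add_mul ht (x * t ^ N), prod_range_succ, mul_assoc x, ← pow_succ]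
    ring

lemma tendsto_tsum_eulerTerm_mul_pow (ht : ‖t‖ < 1) (x : 𝕜) :
    Tendsto (fun N ↦ ∑' n, eulerTerm t (x * t ^ N) n) atTop (𝓝 1) := by
  rw [← tsum_eulerTerm_zero t]
  refine tendsto_tsum_of_dominated_convergence (summable_norm_eulerTerm ht x) (fun n ↦ ?_)
    (Eventually.of_forall fun N n ↦ norm_eulerTerm_le_of_norm_le t ?_ n)
  · have hcont : Continuous fun y ↦ eulerTerm t y n := by unfold eulerTerm; fun_prop
    have hlim : Tendsto (fun N ↦ x * t ^ N) atTop (𝓝 0) := by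
      simpa using (tendsto_pow_atTop_nhds_zero_of_norm_lt_one ht).const_mul x
    exact (hcont.tendsto 0).comp hlim
  · rw [norm_mul, norm_pow]
    exact mul_le_of_le_one_right (norm_nonneg x) (pow_le_one₀ (norm_nonneg t) ht.le)

theorem tsum_eulerTerm (ht : ‖t‖ < 1) (x : 𝕜) :
    ∑' n, eulerTerm t x n = ∏' k, (1 + x * t ^ k) := by
  have h := (multipliable_one_add_mul_pow ht x).hasProd.tendsto_prod_nat.mul
    (tendsto_tsum_eulerTerm_mul_pow ht x)
  rw [mul_one] at h
  exact (tendsto_nhds_unique (h.congr fun N ↦ (tsum_eulerTerm_eq_prod_mul ht x N).symm)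
    tendsto_const_nhds).symm

lemma tsum_eulerTerm_pow_succ (ht : ‖t‖ < 1) (i : ℕ) :
    ∑' j, eulerTerm t (t ^ (i + 1)) j =
      (∏' k, (1 + t ^ (k + 1))) / ∏ k ∈ range i, (1 + t ^ (k + 1)) := by
  have hne : ∏ k ∈ range i, (1 + t ^ (k + 1)) ≠ 0 :=
    prod_ne_zero_iff.mpr fun k _ ↦ one_add_ne_zero_of_norm_lt_one (norm_pow_succ_lt_one ht k)
  have hshift : (fun k ↦ 1 + t ^ (i + 1) * t ^ k) = fun k ↦ 1 + t ^ (k + i + 1) :=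
    funext fun k ↦ by ring
  rw [tsum_eulerTerm ht, eq_div_iff hne, mul_comm, hshift]
  exact Multipliable.prod_mul_tprod_nat_mul' (hshift ▸ multipliable_one_add_mul_pow ht _)

lemma summable_mul_eulerTerm_pow_succ (ht : ‖t‖ < 1) :
    Summable fun p : ℕ × ℕ ↦
      (t ^ 2) ^ p.1 * (t ^ 2) ^ p.1.choose 2 / qPoch t p.1 * eulerTerm t (t ^ (p.1 + 1)) p.2 := by
  refine .of_norm_bounded
    ((summable_norm_eulerTerm ht (t ^ 2)).mul_norm (summable_norm_eulerTerm ht t)) fun p ↦ ?_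
  have hsq : ‖t ^ 2‖ ≤ ‖t‖ := by
    rw [norm_pow]; exact pow_le_of_le_one (norm_nonneg t) ht.le two_ne_zero
  have hpow : ‖t ^ (p.1 + 1)‖ ≤ ‖t‖ := by
    rw [norm_pow]; exact pow_le_of_le_one (norm_nonneg t) ht.le (Nat.add_one_ne_zero _)
  rw [norm_mul, norm_mul]
  gcongr
  · simp only [eulerTerm, norm_div, norm_mul, norm_pow]
    gcongr
    rwa [← norm_pow]
  · exact norm_eulerTerm_le_of_norm_le t hpow p.2

theorem tsum_pow_div_qPoch_mul_qPoch (ht : ‖t‖ < 1) :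
    ∑' p : ℕ × ℕ, t ^ (p.1 ^ 2 + p.1 * p.2 + p.2.choose 2 + p.1 + p.2) /
        (qPoch t p.1 * qPoch t p.2) =
      (∏' k, (1 - (t ^ 4) ^ (k + 1))) / ∏' k, (1 - t ^ (k + 1)) := by
  have ht2 : ‖t ^ 2‖ < 1 := norm_pow_succ_lt_one ht 1
  have hsum := summable_mul_eulerTerm_pow_succ ht
  have houter : ∀ i, (t ^ 2) ^ i * (t ^ 2) ^ i.choose 2 / qPoch t i *
      ((∏' k, (1 + t ^ (k + 1))) / ∏ k ∈ range i, (1 + t ^ (k + 1))) =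
      (∏' k, (1 + t ^ (k + 1))) * eulerTerm (t ^ 2) (t ^ 2) i := by
    intro i
    have := qPoch_ne_zero ht i
    have := qPoch_ne_zero ht2 i
    rw [eulerTerm, ← qPoch_mul_prod_one_add]
    field_simp
  have hprod : ∏' k, (1 + t ^ 2 * (t ^ 2) ^ k) = ∏' k, (1 + (t ^ 2) ^ (k + 1)) :=
    tprod_congr fun k ↦ by ring
  simp_rw [pow_div_qPoch_mul_qPoch_eq]
  rw [hsum.tsum_prod' hsum.prod_factor]
  simp_rw [tsum_mul_left, tsum_eulerTerm_pow_succ ht, houter]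
  rw [tsum_mul_left, tsum_eulerTerm ht2, hprod, tprod_one_add_pow_succ ht2,
    tprod_one_add_pow_succ ht, ← pow_mul]
  have := tprod_one_sub_pow_succ_ne_zero ht
  have := tprod_one_sub_pow_succ_ne_zero ht2
  field_simp

end

/-- Example 2 with B = (1, 1/2)ᵀ (after replacing q by q²). -/
theorem example2_case4 (q : ℂ) (hq : ‖q‖ < 1) :
    ∑' p : ℕ × ℕ,
      q ^ (2 * p.1 ^ 2 + 2 * p.1 * p.2 + p.2 ^ 2 + 2 * p.1 + p.2) /
        ((∏ k ∈ Finset.range p.1, (1 - q ^ (2 * (k + 1)))) *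
          ∏ k ∈ Finset.range p.2, (1 - q ^ (2 * (k + 1)))) =
    (∏' k : ℕ, (1 - q ^ (8 * (k + 1)))) / ∏' k : ℕ, (1 - q ^ (2 * (k + 1))) := by
  have hexp : ∀ i j : ℕ, 2 * i ^ 2 + 2 * i * j + j ^ 2 + 2 * i + j =
      2 * (i ^ 2 + i * j + j.choose 2 + i + j) := fun i j ↦ by
    linarith [two_mul_choose_two_add_self j]
  simp only [hexp, pow_mul, show q ^ 8 = (q ^ 2) ^ 4 by ring]
  exact tsum_pow_div_qPoch_mul_qPoch (norm_pow_succ_lt_one hq 1)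
end
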